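/- arXiv:2107.00069 — 2 statements merged into one kernel-verified Lean document; each statement's English description precedes it below -/
import Mathlib

section
/- Let m ≥ 1, α > 0, T_c > 0, d ≥ 0, q₁ > −1, b₀ = 1 + q₁, β* = d/b₀. Let y : [0, ∞) → ℝᵐ and β̂ : [0, ∞) → ℝ be differentiable with y(τ) ≠ 0 for all τ, β̂(0) ≥ 0, β̂'(τ) = α·T_c·e^{−ατ}·‖y(τ)‖, and y'(τ) = −β̂(τ)·α·T_c·e^{−ατ}·(I + Δ(τ))(y(τ)/‖y(τ)‖) − (I + Δ(τ))y(τ) + f̄(τ), where each Δ(τ) satisfies the Rayleigh lower bound q₁ and ‖f̄(τ)‖ ≤ α·T_c·e^{−ατ}·d. Then y is square-integrable on [0, ∞) with ∫_{0}^{∞} ‖y(s)‖² ds ≤ (‖y(0)‖² + b₀(β̂(0) − β*)²)/(2·b₀). -/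
/-!
With `b₀ = 1 + q₁` and `β* = d / b₀`, the Lyapunov function
`V = (‖y‖² + b₀ (β̂ - β*)²) / 2` satisfies `V' ≤ -b₀ ‖y‖²` on `[0, ∞)`: the adaptation law makes
`β̂` nondecreasing, hence nonnegative, and then the Rayleigh bound lets the adaptive gain absorb
the disturbance. Integrating, `b₀ ∫₀ᵀ ‖y‖² ≤ V(0) - V(T) ≤ V(0)` for every `T`, and a
nonnegative integrand with bounded partial integrals is integrable on `(0, ∞)`.
-/

/-- `Δ` satisfies the Rayleigh lower bound `q₁`: `⟨v, Δv⟩ ≥ q₁‖v‖²` for all `v`. -/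
def RayleighLB {m : ℕ} (Δ : EuclideanSpace ℝ (Fin m) →L[ℝ] EuclideanSpace ℝ (Fin m))
    (q₁ : ℝ) : Prop :=
  ∀ v : EuclideanSpace ℝ (Fin m), q₁ * ‖v‖ ^ 2 ≤ (inner ℝ v (Δ v) : ℝ)

open Set MeasureTheory Filter

theorem integrableOn_Ioi_and_integral_le_of_intervalIntegral_le {f : ℝ → ℝ} {a C : ℝ}
    (hf : ContinuousOn f (Ici a)) (hf_nonneg : ∀ x ∈ Ici a, 0 ≤ f x)
    (hC : ∀ T, a ≤ T → ∫ x in a..T, f x ≤ C) :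
    IntegrableOn f (Ioi a) ∧ ∫ x in Ioi a, f x ≤ C := by
  have hfi : ∀ T, IntegrableOn f (Ioc a T) := fun T =>
    ((hf.mono Icc_subset_Ici_self).integrableOn_Icc).mono_set Ioc_subset_Icc_self
  have hint : IntegrableOn f (Ioi a) := by
    refine integrableOn_Ioi_of_intervalIntegral_norm_bounded C a hfi tendsto_id ?_
    filter_upwards [eventually_ge_atTop a] with T hT
    calc ∫ x in a..T, ‖f x‖ = ∫ x in a..T, f x :=
          intervalIntegral.integral_congr fun x hx =>
            Real.norm_of_nonneg (hf_nonneg x (by rw [uIcc_of_le hT] at hx; exact hx.1))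
      _ ≤ C := hC T hT
  refine ⟨hint, le_of_tendsto (intervalIntegral_tendsto_integral_Ioi a hint tendsto_id) ?_⟩
  filter_upwards [eventually_ge_atTop a] with T hT using hC T hT

theorem intervalIntegral_le_of_hasDerivWithinAt_le_neg {V V' g : ℝ → ℝ} {a c T : ℝ}
    (hc : 0 < c) (hV : ∀ x ∈ Ici a, HasDerivWithinAt V (V' x) (Ici a) x)
    (hV' : ∀ x ∈ Ici a, V' x ≤ -(c * g x)) (hV_nonneg : 0 ≤ V T)
    (hg : ContinuousOn g (Ici a)) (hT : a ≤ T) :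
    ∫ x in a..T, g x ≤ V a / c := by
  have hdecay : V T - V a ≤ ∫ x in a..T, -(c * g x) :=
    intervalIntegral.sub_le_integral_of_hasDeriv_right_of_le hT
      (fun x hx => (hV x hx.1).continuousWithinAt.mono Icc_subset_Ici_self)
      (fun x hx => (hV x hx.1.le).mono (Ioi_subset_Ici hx.1.le))
      ((hg.mono Icc_subset_Ici_self).integrableOn_Icc.const_mul c).neg
      (fun x hx => hV' x hx.1.le)
  rw [intervalIntegral.integral_neg, intervalIntegral.integral_const_mul] at hdecay
  rw [le_div_iff₀ hc]
  linarith

theorem nonneg_of_hasDerivWithinAt_nonneg {f f' : ℝ → ℝ} {a : ℝ} (ha : 0 ≤ f a)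
    (hf : ∀ x ∈ Ici a, HasDerivWithinAt f (f' x) (Ici a) x) (hf' : ∀ x ∈ Ici a, 0 ≤ f' x)
    {x : ℝ} (hx : a ≤ x) : 0 ≤ f x := by
  refine ha.trans (monotoneOn_of_hasDerivWithinAt_nonneg (f' := f') (convex_Ici a)
    (fun x hx => (hf x hx).continuousWithinAt) (fun x hx => ?_) (fun x hx => ?_)
    self_mem_Ici hx hx)
  · rw [interior_Ici] at hx ⊢
    exact (hf x (mem_Ici_of_Ioi hx)).mono Ioi_subset_Ici_self
  · exact hf' x (interior_subset hx)

section Rayleigh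

variable {m : ℕ} {Δ : EuclideanSpace ℝ (Fin m) →L[ℝ] EuclideanSpace ℝ (Fin m)} {q₁ : ℝ}

theorem RayleighLB.mul_norm_sq_le_inner_id_add (hΔ : RayleighLB Δ q₁)
    (v : EuclideanSpace ℝ (Fin m)) :
    (1 + q₁) * ‖v‖ ^ 2 ≤
      inner ℝ v ((ContinuousLinearMap.id ℝ (EuclideanSpace ℝ (Fin m)) + Δ) v) := by
  rw [add_apply, ContinuousLinearMap.id_apply, inner_add_right, real_inner_self_eq_norm_sq]
  linarith [hΔ v]

/- The drive term contributes at most `-β g (1 + q₁) ‖y‖`, which cancels the adaptation term,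
and what is left of the latter, `-(1 + q₁) β* g ‖y‖ = -g d ‖y‖`, dominates `⟪y, f⟫`. -/
theorem RayleighLB.inner_closedLoop_add_le (hΔ : RayleighLB Δ q₁) (hq₁ : 1 + q₁ ≠ 0)
    {β g d : ℝ} (hβ : 0 ≤ β) (hg : 0 ≤ g) {y f : EuclideanSpace ℝ (Fin m)}
    (hf : ‖f‖ ≤ g * d) :
    inner ℝ y
        (-(β * g) • (ContinuousLinearMap.id ℝ (EuclideanSpace ℝ (Fin m)) + Δ) (‖y‖⁻¹ • y)
        - (ContinuousLinearMap.id ℝ (EuclideanSpace ℝ (Fin m)) + Δ) y + f)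
      + (1 + q₁) * (β - d / (1 + q₁)) * (g * ‖y‖) ≤ -((1 + q₁) * ‖y‖ ^ 2) := by
  set P := inner ℝ y ((ContinuousLinearMap.id ℝ (EuclideanSpace ℝ (Fin m)) + Δ) y)
  have hP : (1 + q₁) * ‖y‖ ^ 2 ≤ P := hΔ.mul_norm_sq_le_inner_id_add y
  have hnorm : ‖y‖⁻¹ * ‖y‖ ^ 2 = ‖y‖ := by
    rcases eq_or_ne ‖y‖ 0 with h | h
    · simp [h]
    · field_simp
  have hdrive : (β * g) * ((1 + q₁) * ‖y‖) ≤ (β * g) * (‖y‖⁻¹ * P) := by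
    refine mul_le_mul_of_nonneg_left ?_ (by positivity)
    calc (1 + q₁) * ‖y‖ = ‖y‖⁻¹ * ((1 + q₁) * ‖y‖ ^ 2) := by rw [mul_left_comm, hnorm]
      _ ≤ ‖y‖⁻¹ * P := by gcongr
  have hdist : inner ℝ y f ≤ ‖y‖ * (g * d) :=
    (real_inner_le_norm y f).trans (mul_le_mul_of_nonneg_left hf (norm_nonneg y))
  have hadapt : (1 + q₁) * (β - d / (1 + q₁)) * (g * ‖y‖)
      = (β * g) * ((1 + q₁) * ‖y‖) - ‖y‖ * (g * d) := by
    field_simp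
  rw [map_smul, inner_add_right, inner_sub_right, real_inner_smul_right,
    real_inner_smul_right]
  linarith

end Rayleigh

theorem hasDerivWithinAt_half_norm_sq_add_mul_sq {E : Type*} [NormedAddCommGroup E]
    [InnerProductSpace ℝ E] {y : ℝ → E} {y' : E} {β : ℝ → ℝ} {β' b c τ : ℝ} {s : Set ℝ}
    (hy : HasDerivWithinAt y y' s τ) (hβ : HasDerivWithinAt β β' s τ) :
    HasDerivWithinAt (fun t => (‖y t‖ ^ 2 + b * (β t - c) ^ 2) / 2)
      (inner ℝ (y τ) y' + b * (β τ - c) * β') s τ := by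
  refine ((hy.norm_sq.fun_add (((hβ.sub_const c).fun_pow 2).const_mul b)).div_const 2
    ).congr_deriv ?_
  push_cast
  ring

theorem statement10_general {m : ℕ} (α Tc d q₁ : ℝ)
    (hα : 0 < α) (hTc : 0 < Tc) (hq₁ : -1 < q₁)
    (y : ℝ → EuclideanSpace ℝ (Fin m)) (βhat : ℝ → ℝ)
    (Δ : ℝ → EuclideanSpace ℝ (Fin m) →L[ℝ] EuclideanSpace ℝ (Fin m))
    (fbar : ℝ → EuclideanSpace ℝ (Fin m))
    (hβ0 : 0 ≤ βhat 0)
    (hβ' : ∀ τ ∈ Set.Ici (0 : ℝ),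
      HasDerivWithinAt βhat (α * Tc * Real.exp (-α * τ) * ‖y τ‖) (Set.Ici 0) τ)
    (hy' : ∀ τ ∈ Set.Ici (0 : ℝ),
      HasDerivWithinAt y
        (-(βhat τ * (α * Tc * Real.exp (-α * τ))) •
            ((ContinuousLinearMap.id ℝ (EuclideanSpace ℝ (Fin m)) + Δ τ) (‖y τ‖⁻¹ • y τ))
          - (ContinuousLinearMap.id ℝ (EuclideanSpace ℝ (Fin m)) + Δ τ) (y τ)
          + fbar τ) (Set.Ici 0) τ)
    (hΔ : ∀ τ ∈ Set.Ici (0 : ℝ), RayleighLB (Δ τ) q₁)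
    (hfbar : ∀ τ ∈ Set.Ici (0 : ℝ), ‖fbar τ‖ ≤ α * Tc * Real.exp (-α * τ) * d) :
    MeasureTheory.IntegrableOn (fun s => ‖y s‖ ^ 2) (Set.Ioi (0 : ℝ)) ∧
    ∫ s in Set.Ioi (0 : ℝ), ‖y s‖ ^ 2 ≤
      (‖y 0‖ ^ 2 + (1 + q₁) * (βhat 0 - d / (1 + q₁)) ^ 2) / (2 * (1 + q₁)) := by
  have hb₀ : 0 < 1 + q₁ := by linarith
  have hβhat_nonneg : ∀ τ ∈ Ici 0, 0 ≤ βhat τ := fun τ hτ =>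
    nonneg_of_hasDerivWithinAt_nonneg hβ0 hβ' (fun x _ => by positivity) hτ
  have hcont : ContinuousOn (fun s => ‖y s‖ ^ 2) (Ici 0) := fun τ hτ =>
    (hy' τ hτ).continuousWithinAt.norm.pow 2
  have hbound (T : ℝ) (hT : 0 ≤ T) : ∫ s in 0..T, ‖y s‖ ^ 2 ≤
      (‖y 0‖ ^ 2 + (1 + q₁) * (βhat 0 - d / (1 + q₁)) ^ 2) / 2 / (1 + q₁) := by
    refine intervalIntegral_le_of_hasDerivWithinAt_le_neg hb₀
      (fun τ hτ => hasDerivWithinAt_half_norm_sq_add_mul_sq (hy' τ hτ) (hβ' τ hτ))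
      (fun τ hτ => (hΔ τ hτ).inner_closedLoop_add_le hb₀.ne' (hβhat_nonneg τ hτ)
        (by positivity) (hfbar τ hτ))
      ?_ hcont hT
    positivity
  obtain ⟨hint, hle⟩ := integrableOn_Ioi_and_integral_le_of_intervalIntegral_le hcont
    (fun _ _ => by positivity) hbound
  exact ⟨hint, hle.trans_eq (div_div _ _ _)⟩

theorem statement10 {m : ℕ} (hm : 1 ≤ m) (α Tc d q₁ : ℝ)
    (hα : 0 < α) (hTc : 0 < Tc) (hd : 0 ≤ d) (hq₁ : -1 < q₁)
    (y : ℝ → EuclideanSpace ℝ (Fin m)) (βhat : ℝ → ℝ)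
    (Δ : ℝ → EuclideanSpace ℝ (Fin m) →L[ℝ] EuclideanSpace ℝ (Fin m))
    (fbar : ℝ → EuclideanSpace ℝ (Fin m))
    (hy0 : ∀ τ ∈ Set.Ici (0 : ℝ), y τ ≠ 0)
    (hβ0 : 0 ≤ βhat 0)
    (hβ' : ∀ τ ∈ Set.Ici (0 : ℝ),
      HasDerivWithinAt βhat (α * Tc * Real.exp (-α * τ) * ‖y τ‖) (Set.Ici 0) τ)
    (hy' : ∀ τ ∈ Set.Ici (0 : ℝ),
      HasDerivWithinAt y
        (-(βhat τ * (α * Tc * Real.exp (-α * τ))) •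
            ((ContinuousLinearMap.id ℝ (EuclideanSpace ℝ (Fin m)) + Δ τ) (‖y τ‖⁻¹ • y τ))
          - (ContinuousLinearMap.id ℝ (EuclideanSpace ℝ (Fin m)) + Δ τ) (y τ)
          + fbar τ) (Set.Ici 0) τ)
    (hΔ : ∀ τ ∈ Set.Ici (0 : ℝ), RayleighLB (Δ τ) q₁)
    (hfbar : ∀ τ ∈ Set.Ici (0 : ℝ), ‖fbar τ‖ ≤ α * Tc * Real.exp (-α * τ) * d) :
    MeasureTheory.IntegrableOn (fun s => ‖y s‖ ^ 2) (Set.Ioi (0 : ℝ)) ∧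
    ∫ s in Set.Ioi (0 : ℝ), ‖y s‖ ^ 2 ≤
      (‖y 0‖ ^ 2 + (1 + q₁) * (βhat 0 - d / (1 + q₁)) ^ 2) / (2 * (1 + q₁)) :=
  statement10_general α Tc d q₁ hα hTc hq₁ y βhat Δ fbar hβ0 hβ' hy' hΔ hfbar
end

section
/- Let m ≥ 1, α > 0, T_c > 0, d ≥ 0, q₁ > −1, b₀ = 1 + q₁, β* = d/b₀. Let y : [0, ∞) → ℝᵐ and β̂ : [0, ∞) → ℝ be differentiable with y(τ) ≠ 0 for all τ, β̂(0) ≥ 0, β̂'(τ) = α·T_c·e^{−ατ}·‖y(τ)‖, and y'(τ) = −β̂(τ)·α·T_c·e^{−ατ}·(I + Δ(τ))(y(τ)/‖y(τ)‖) − (I + Δ(τ))y(τ) + f̄(τ), where each Δ(τ) satisfies the Rayleigh lower bound q₁ and ‖f̄(τ)‖ ≤ α·T_c·e^{−ατ}·d. Then the adaptive gain remains bounded: β̂(τ) ≤ β* + √((‖y(0)‖² + b₀(β̂(0) − β*)²)/b₀) for all τ ≥ 0. -/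
open scoped RealInnerProductSpace

section Calculus

variable {f f' : ℝ → ℝ} {a : ℝ}

theorem monotoneOn_Ici_of_hasDerivWithinAt_nonneg
    (hf : ∀ x ∈ Set.Ici a, HasDerivWithinAt f (f' x) (Set.Ici a) x)
    (hf' : ∀ x ∈ Set.Ici a, 0 ≤ f' x) : MonotoneOn f (Set.Ici a) := by
  refine monotoneOn_of_hasDerivWithinAt_nonneg (f' := f') (convex_Ici a)
    (fun x hx => (hf x hx).continuousWithinAt) (fun x hx => ?_) (fun x hx => ?_)
  · rw [interior_Ici] at hx ⊢
    exact (hf x (Set.mem_Ici_of_Ioi hx)).mono Set.Ioi_subset_Ici_self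
  · rw [interior_Ici] at hx
    exact hf' x (Set.mem_Ici_of_Ioi hx)

theorem antitoneOn_Ici_of_hasDerivWithinAt_nonpos
    (hf : ∀ x ∈ Set.Ici a, HasDerivWithinAt f (f' x) (Set.Ici a) x)
    (hf' : ∀ x ∈ Set.Ici a, f' x ≤ 0) : AntitoneOn f (Set.Ici a) := by
  have := monotoneOn_Ici_of_hasDerivWithinAt_nonneg (fun x hx => (hf x hx).neg)
    (fun x hx => neg_nonneg.mpr (hf' x hx))
  exact fun x hx y hy hxy => neg_le_neg_iff.mp (this hx hy hxy)

end Calculus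

theorem RayleighLB.one_add_mul_norm_sq_le_inner {m : ℕ}
    {Δ : EuclideanSpace ℝ (Fin m) →L[ℝ] EuclideanSpace ℝ (Fin m)} {q : ℝ}
    (h : RayleighLB Δ q) (v : EuclideanSpace ℝ (Fin m)) :
    (1 + q) * ‖v‖ ^ 2 ≤ ⟪v, (ContinuousLinearMap.id ℝ (EuclideanSpace ℝ (Fin m)) + Δ) v⟫ := by
  rw [add_apply, ContinuousLinearMap.id_apply, inner_add_right,
    real_inner_self_eq_norm_sq]
  linarith [h v]

section Lyapunov

variable {E : Type*} [NormedAddCommGroup E] [InnerProductSpace ℝ E]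
  {A : E →L[ℝ] E} {b : ℝ}

theorem HasDerivWithinAt.norm_sq_add_mul_sub_sq {y : ℝ → E} {β : ℝ → ℝ} {y' : E}
    {β' c : ℝ} {s : Set ℝ} {t : ℝ} (hy : HasDerivWithinAt y y' s t)
    (hβ : HasDerivWithinAt β β' s t) :
    HasDerivWithinAt (fun t => ‖y t‖ ^ 2 + b * (β t - c) ^ 2)
      (2 * ⟪y t, y'⟫ + b * (2 * (β t - c) * β')) s t :=
  (hy.norm_sq.add (((hβ.sub_const c).pow 2).const_mul b)).congr_deriv (by norm_num)

theorem mul_norm_le_inner_apply_inv_norm_smul (hA : ∀ v, b * ‖v‖ ^ 2 ≤ ⟪v, A v⟫) (y : E) :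
    b * ‖y‖ ≤ ⟪y, A (‖y‖⁻¹ • y)⟫ := by
  rcases eq_or_ne y 0 with rfl | hy
  · simp
  have hn : 0 < ‖y‖ := norm_pos_iff.mpr hy
  rw [map_smul, real_inner_smul_right, le_inv_mul_iff₀ hn]
  linarith [hA y]

/-- The left side is `V'` for `V = ‖y‖² + b (β - d / b)²` when `y' = -(β g) • A (y / ‖y‖) - A y + f`
and `β' = g ‖y‖`. -/
theorem lyapunov_deriv_nonpos (hA : ∀ v, b * ‖v‖ ^ 2 ≤ ⟪v, A v⟫) (hb : 0 < b)
    {β g d : ℝ} (hβg : 0 ≤ β * g) {y f : E} (hf : ‖f‖ ≤ g * d) :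
    2 * ⟪y, -(β * g) • A (‖y‖⁻¹ • y) - A y + f⟫ + b * (2 * (β - d / b) * (g * ‖y‖)) ≤ 0 := by
  have hadapt := mul_le_mul_of_nonneg_left (mul_norm_le_inner_apply_inv_norm_smul hA y) hβg
  have hdist : ⟪y, f⟫ ≤ ‖y‖ * (g * d) :=
    (real_inner_le_norm y f).trans (mul_le_mul_of_nonneg_left hf (norm_nonneg y))
  have hgain : b * (2 * (β - d / b)) = 2 * (b * β - d) := by field_simp
  rw [inner_add_right, inner_sub_right, real_inner_smul_right, ← mul_assoc b, hgain]
  nlinarith [hA y, mul_nonneg hb.le (sq_nonneg ‖y‖)]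

end Lyapunov

theorem le_add_sqrt_div_of_mul_sq_le {b x c V : ℝ} (hb : 0 < b) (h : b * (x - c) ^ 2 ≤ V) :
    x ≤ c + √(V / b) := by
  have := Real.abs_le_sqrt ((le_div_iff₀ hb).mpr (by linarith) : (x - c) ^ 2 ≤ V / b)
  linarith [le_abs_self (x - c)]

theorem statement11_general {m : ℕ} (α Tc d q₁ : ℝ)
    (hα : 0 < α) (hTc : 0 < Tc) (hq₁ : -1 < q₁)
    (y : ℝ → EuclideanSpace ℝ (Fin m)) (βhat : ℝ → ℝ)
    (Δ : ℝ → EuclideanSpace ℝ (Fin m) →L[ℝ] EuclideanSpace ℝ (Fin m))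
    (fbar : ℝ → EuclideanSpace ℝ (Fin m))
    (hβ0 : 0 ≤ βhat 0)
    (hβ' : ∀ τ ∈ Set.Ici (0 : ℝ),
      HasDerivWithinAt βhat (α * Tc * Real.exp (-α * τ) * ‖y τ‖) (Set.Ici 0) τ)
    (hy' : ∀ τ ∈ Set.Ici (0 : ℝ),
      HasDerivWithinAt y
        (-(βhat τ * (α * Tc * Real.exp (-α * τ))) •
            ((ContinuousLinearMap.id ℝ (EuclideanSpace ℝ (Fin m)) + Δ τ) (‖y τ‖⁻¹ • y τ))
          - (ContinuousLinearMap.id ℝ (EuclideanSpace ℝ (Fin m)) + Δ τ) (y τ)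
          + fbar τ) (Set.Ici 0) τ)
    (hΔ : ∀ τ ∈ Set.Ici (0 : ℝ), RayleighLB (Δ τ) q₁)
    (hfbar : ∀ τ ∈ Set.Ici (0 : ℝ), ‖fbar τ‖ ≤ α * Tc * Real.exp (-α * τ) * d) :
    ∀ τ ≥ (0 : ℝ), βhat τ ≤ d / (1 + q₁) +
      Real.sqrt ((‖y 0‖ ^ 2 + (1 + q₁) * (βhat 0 - d / (1 + q₁)) ^ 2) / (1 + q₁)) := by
  intro τ hτ
  have hb₀ : 0 < 1 + q₁ := by linarith
  have hβmono : MonotoneOn βhat (Set.Ici 0) :=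
    monotoneOn_Ici_of_hasDerivWithinAt_nonneg hβ' fun t _ => by positivity
  have hV : AntitoneOn (fun t => ‖y t‖ ^ 2 + (1 + q₁) * (βhat t - d / (1 + q₁)) ^ 2)
      (Set.Ici 0) := by
    refine antitoneOn_Ici_of_hasDerivWithinAt_nonpos
      (fun t ht => (hy' t ht).norm_sq_add_mul_sub_sq (hβ' t ht)) fun t ht => ?_
    have hβt : 0 ≤ βhat t := hβ0.trans (hβmono Set.self_mem_Ici ht ht)
    exact lyapunov_deriv_nonpos (hΔ t ht).one_add_mul_norm_sq_le_inner hb₀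
      (by positivity) (hfbar t ht)
  refine le_add_sqrt_div_of_mul_sq_le hb₀ ?_
  nlinarith [hV Set.self_mem_Ici hτ hτ, sq_nonneg ‖y τ‖]

theorem statement11 {m : ℕ} (hm : 1 ≤ m) (α Tc d q₁ : ℝ)
    (hα : 0 < α) (hTc : 0 < Tc) (hd : 0 ≤ d) (hq₁ : -1 < q₁)
    (y : ℝ → EuclideanSpace ℝ (Fin m)) (βhat : ℝ → ℝ)
    (Δ : ℝ → EuclideanSpace ℝ (Fin m) →L[ℝ] EuclideanSpace ℝ (Fin m))
    (fbar : ℝ → EuclideanSpace ℝ (Fin m))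
    (hy0 : ∀ τ ∈ Set.Ici (0 : ℝ), y τ ≠ 0)
    (hβ0 : 0 ≤ βhat 0)
    (hβ' : ∀ τ ∈ Set.Ici (0 : ℝ),
      HasDerivWithinAt βhat (α * Tc * Real.exp (-α * τ) * ‖y τ‖) (Set.Ici 0) τ)
    (hy' : ∀ τ ∈ Set.Ici (0 : ℝ),
      HasDerivWithinAt y
        (-(βhat τ * (α * Tc * Real.exp (-α * τ))) •
            ((ContinuousLinearMap.id ℝ (EuclideanSpace ℝ (Fin m)) + Δ τ) (‖y τ‖⁻¹ • y τ))
          - (ContinuousLinearMap.id ℝ (EuclideanSpace ℝ (Fin m)) + Δ τ) (y τ)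
          + fbar τ) (Set.Ici 0) τ)
    (hΔ : ∀ τ ∈ Set.Ici (0 : ℝ), RayleighLB (Δ τ) q₁)
    (hfbar : ∀ τ ∈ Set.Ici (0 : ℝ), ‖fbar τ‖ ≤ α * Tc * Real.exp (-α * τ) * d) :
    ∀ τ ≥ (0 : ℝ), βhat τ ≤ d / (1 + q₁) +
      Real.sqrt ((‖y 0‖ ^ 2 + (1 + q₁) * (βhat 0 - d / (1 + q₁)) ^ 2) / (1 + q₁)) :=
  statement11_general α Tc d q₁ hα hTc hq₁ y βhat Δ fbar hβ0 hβ' hy' hΔ hfbar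
end
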